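/- arXiv:2302.07298 — 5 statements merged into one kernel-verified Lean document; each statement's English description precedes it below -/
import Mathlib

section
/- For every x ∈ ℤ and every real s with |s| < 1, E[s^{σ_x} · 1_{σ_x < ∞}] = u_s(x)/u_s(0). (Note u_s(0) ≥ 1 > 0, so the quotient is well defined.) -/
open MeasureTheory ProbabilityTheory

/-- The first hitting time of `0` by the walk `x + S k`, valued in `ℕ∞`
(`⊤` if the walk never hits `0`). -/
noncomputable def hitTime {Ω : Type*} (S : ℕ → Ω → ℤ) (x : ℤ) (ω : Ω) : ℕ∞ :=
  ⨅ (k : ℕ) (_ : x + S k ω = 0), (k : ℕ∞)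

/-!
Split the event `{x + S k = 0}` according to the first time `j ≤ k` at which the walk started
at `x` hits `0`. That event depends on `τ 0, …, τ (j - 1)` only, and the remaining increment
`τ j + ⋯ + τ (k - 1)` is independent of it and distributed as `S (k - j)`, so
`P{S k = -x} = ∑_{j ≤ k} P{σ_x = j} P{S (k - j) = 0}`. Multiplying by `s ^ k` and summing, this
convolution identity becomes `u_s(x) = E[s^σ_x; σ_x < ∞] · u_s(0)`. The same decomposition at the
first time `ρ ≥ 1` at which `S` returns to `0` gives `u_s(0) = 1 + E[s^ρ; ρ < ∞] · u_s(0)`, so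
`u_s(0) ≠ 0`.
-/

open Finset

section FirstHit

variable {Ω α : Type*}

def firstHitAfter (X : ℕ → Ω → α) (n₀ : ℕ) (y : α) (j : ℕ) : Set Ω :=
  {ω | n₀ ≤ j ∧ X j ω = y ∧ ∀ i, n₀ ≤ i → i < j → X i ω ≠ y}

variable {X : ℕ → Ω → α} {n₀ : ℕ} {y : α}

theorem pairwise_disjoint_firstHitAfter :
    Pairwise (Function.onFun Disjoint (firstHitAfter X n₀ y)) := by
  intro j j' hne
  refine Set.disjoint_left.mpr fun ω ⟨hj, hXj, hminj⟩ ⟨hj', hXj', hminj'⟩ => ?_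
  rcases hne.lt_or_gt with hlt | hgt
  · exact hminj' j hj hlt hXj
  · exact hminj j' hj' hgt hXj'

theorem firstHitAfter_eq_empty {j : ℕ} (hj : j < n₀) : firstHitAfter X n₀ y j = ∅ :=
  Set.eq_empty_of_forall_notMem fun _ hω => hj.not_ge hω.1

theorem exists_mem_firstHitAfter {k : ℕ} {ω : Ω} (hk : n₀ ≤ k) (hXk : X k ω = y) :
    ∃ j ≤ k, ω ∈ firstHitAfter X n₀ y j := by
  classical
  have hex : ∃ j, n₀ ≤ j ∧ X j ω = y := ⟨k, hk, hXk⟩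
  obtain ⟨hn₀, hXj⟩ := Nat.find_spec hex
  exact ⟨Nat.find hex, Nat.find_min' hex ⟨hk, hXk⟩,
    hn₀, hXj, fun i hi hij hXi => Nat.find_min hex hij ⟨hi, hXi⟩⟩

theorem mem_firstHitAfter_of_eq {j : ℕ} {ω ω' : Ω} (h : ∀ i ≤ j, X i ω = X i ω')
    (hω : ω ∈ firstHitAfter X n₀ y j) : ω' ∈ firstHitAfter X n₀ y j := by
  obtain ⟨hj, hXj, hmin⟩ := hω
  exact ⟨hj, h j le_rfl ▸ hXj, fun i hi hij => h i hij.le ▸ hmin i hi hij⟩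

theorem measurableSet_firstHitAfter [MeasurableSpace Ω] [MeasurableSpace α]
    [MeasurableSingletonClass α] (hX : ∀ k, Measurable (X k)) (j : ℕ) :
    MeasurableSet (firstHitAfter X n₀ y j) := by
  simp only [firstHitAfter, Set.ofPred_and, Set.ofPred_forall]
  exact .inter (.const _) <| .inter (hX j (measurableSet_singleton y)) <|
    .iInter fun i => .iInter fun _ => .iInter fun _ => (hX i (measurableSet_singleton y)).compl

end FirstHit

section HitTime

variable {Ω : Type*} {S : ℕ → Ω → ℤ} {x : ℤ} {ω : Ω}

theorem hitTime_eq_of_mem_firstHitAfter {j : ℕ} (h : ω ∈ firstHitAfter S 0 (-x) j) :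
    hitTime S x ω = j := by
  obtain ⟨-, hSj, hmin⟩ := h
  refine le_antisymm (iInf₂_le j (by omega)) (le_iInf₂ fun k hk => ?_)
  by_contra! hkj
  exact hmin k k.zero_le (by exact_mod_cast hkj) (by omega)

theorem hitTime_eq_top (h : ∀ k, x + S k ω ≠ 0) : hitTime S x ω = ⊤ := by
  simp [hitTime, h]

theorem ite_hitTime_eq_tsum_indicator (s : ℝ) :
    (if hitTime S x ω = ⊤ then (0 : ℝ) else s ^ (hitTime S x ω).toNat) =
      ∑' j, (firstHitAfter S 0 (-x) j).indicator (fun _ => s ^ j) ω := by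
  by_cases hhit : ∃ k, x + S k ω = 0
  · obtain ⟨k, hk⟩ := hhit
    obtain ⟨j, -, hj⟩ :=
      exists_mem_firstHitAfter (X := S) (ω := ω) k.zero_le (y := -x) (by omega)
    rw [hitTime_eq_of_mem_firstHitAfter hj, tsum_eq_single j fun j' hj' =>
      Set.indicator_of_notMem ((pairwise_disjoint_firstHitAfter hj').notMem_of_mem_right hj) _,
      Set.indicator_of_mem hj]
    simp
  · push Not at hhit
    have hnot : ∀ j, ω ∉ firstHitAfter S 0 (-x) j := fun j hj =>
      hhit j (by rw [hj.2.1, add_neg_cancel])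
    simp [hitTime_eq_top hhit, Set.indicator_of_notMem (hnot _)]

end HitTime

section Independence

variable {Ω ι β : Type*} [MeasurableSpace Ω] {P : Measure Ω} [MeasurableSpace β]
  [Countable β] [MeasurableSingletonClass β] {τ : ι → Ω → β}

theorem ProbabilityTheory.iIndepFun.measure_inter_eq_mul_of_disjoint (hindep : iIndepFun τ P)
    (hmeas : ∀ i, Measurable (τ i)) {I J : Finset ι} (hIJ : Disjoint I J) {A B : Set Ω}
    (hA : ∀ ω ω', (∀ i ∈ I, τ i ω = τ i ω') → ω ∈ A → ω' ∈ A)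
    (hB : ∀ ω ω', (∀ i ∈ J, τ i ω = τ i ω') → ω ∈ B → ω' ∈ B) :
    P (A ∩ B) = P A * P B := by
  set Y : Ω → I → β := fun ω i => τ i ω
  set Z : Ω → J → β := fun ω i => τ i ω
  have hA' : Y ⁻¹' (Y '' A) = A := by
    refine subset_antisymm (fun ω ⟨ω', hω', hY⟩ => hA ω' ω (fun i hi => ?_) hω')
      (Set.subset_preimage_image Y A)
    exact congr_fun hY ⟨i, hi⟩
  have hB' : Z ⁻¹' (Z '' B) = B := by
    refine subset_antisymm (fun ω ⟨ω', hω', hZ⟩ => hB ω' ω (fun i hi => ?_) hω')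
      (Set.subset_preimage_image Z B)
    exact congr_fun hZ ⟨i, hi⟩
  rw [← hA', ← hB']
  exact (hindep.indepFun_finset I J hIJ hmeas).measure_inter_preimage_eq_mul _ _
    (Set.to_countable _).measurableSet (Set.to_countable _).measurableSet

end Independence

section Walk

variable {Ω : Type*} {τ : ℕ → Ω → ℤ}

def walk (τ : ℕ → Ω → ℤ) (k : ℕ) (ω : Ω) : ℤ := ∑ i ∈ range k, τ i ω

@[simp]
theorem walk_zero (ω : Ω) : walk τ 0 ω = 0 :=
  sum_range_zero _

theorem walk_add_sum_Ico {j k : ℕ} (hjk : j ≤ k) (ω : Ω) :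
    walk τ j ω + ∑ i ∈ Ico j k, τ i ω = walk τ k ω :=
  sum_range_add_sum_Ico _ hjk

theorem setOf_walk_eq_biUnion {n₀ k : ℕ} (hk : n₀ ≤ k) (y : ℤ) :
    {ω | walk τ k ω = y} =
      ⋃ j ∈ range (k + 1), firstHitAfter (walk τ) n₀ y j ∩ {ω | ∑ i ∈ Ico j k, τ i ω = 0} := by
  ext ω
  simp only [Set.mem_ofPred_eq, Set.mem_iUnion, Set.mem_inter_iff, mem_range, exists_prop]
  constructor
  · intro hω
    obtain ⟨j, hjk, hj⟩ := exists_mem_firstHitAfter hk hω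
    have hsplit := walk_add_sum_Ico (τ := τ) hjk ω
    rw [hj.2.1, hω] at hsplit
    exact ⟨j, Nat.lt_succ_of_le hjk, hj, by omega⟩
  · rintro ⟨j, hjk, hj, hinc⟩
    rw [← walk_add_sum_Ico (Nat.lt_succ_iff.mp hjk), hj.2.1, hinc, add_zero]

variable [MeasurableSpace Ω] {P : Measure Ω}

theorem measurable_walk (hmeas : ∀ n, Measurable (τ n)) (k : ℕ) : Measurable (walk τ k) :=
  Finset.measurable_sum _ fun i _ => hmeas i

theorem identDistrib_sum_Ico (hindep : iIndepFun τ P)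
    (hident : ∀ n, IdentDistrib (τ n) (τ 0) P P) (j k : ℕ) :
    IdentDistrib (fun ω => ∑ i ∈ Ico j k, τ i ω) (walk τ (k - j)) P P := by
  have hshift : IdentDistrib (fun ω n => τ (j + n) ω) (fun ω n => τ n ω) P P :=
    .pi (fun n => (hident _).trans (hident n).symm)
      (hindep.precomp (add_right_injective j)) hindep
  have hsum : Measurable fun v : ℕ → ℤ => ∑ n ∈ range (k - j), v n :=
    Finset.measurable_sum _ fun n _ => measurable_pi_apply n
  show IdentDistrib _ (fun ω => ∑ i ∈ range (k - j), τ i ω) P P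
  simp only [sum_Ico_eq_sum_range]
  exact hshift.comp hsum

variable [IsProbabilityMeasure P]

theorem measureReal_walk_eq_sum (hmeas : ∀ n, Measurable (τ n)) (hindep : iIndepFun τ P)
    (hident : ∀ n, IdentDistrib (τ n) (τ 0) P P) {n₀ k : ℕ} (hk : n₀ ≤ k) (y : ℤ) :
    P.real {ω | walk τ k ω = y} = ∑ j ∈ range (k + 1),
      P.real (firstHitAfter (walk τ) n₀ y j) * P.real {ω | walk τ (k - j) ω = 0} := by
  have hinc : ∀ j, MeasurableSet {ω | ∑ i ∈ Ico j k, τ i ω = 0} := fun j =>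
    Finset.measurable_sum _ (fun i _ => hmeas i) (measurableSet_singleton 0)
  rw [setOf_walk_eq_biUnion hk, measureReal_biUnion_finset
    (f := fun j => firstHitAfter (walk τ) n₀ y j ∩ {ω | ∑ i ∈ Ico j k, τ i ω = 0})
    (fun j _ j' _ hne => (pairwise_disjoint_firstHitAfter hne).mono inf_le_left inf_le_left)
    fun j _ => (measurableSet_firstHitAfter (measurable_walk hmeas) j).inter (hinc j)]
  refine sum_congr rfl fun j _ => ?_
  have hindep_inc : P (firstHitAfter (walk τ) n₀ y j ∩ {ω | ∑ i ∈ Ico j k, τ i ω = 0}) =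
      P (firstHitAfter (walk τ) n₀ y j) * P {ω | ∑ i ∈ Ico j k, τ i ω = 0} := by
    refine hindep.measure_inter_eq_mul_of_disjoint hmeas
      (range_eq_Ico j ▸ Ico_disjoint_Ico_consecutive 0 j k) ?_ ?_
    · intro ω ω' h
      refine mem_firstHitAfter_of_eq fun i hij => sum_congr rfl fun n hn => h n ?_
      exact mem_range.mpr ((mem_range.mp hn).trans_le hij)
    · intro ω ω' h hω
      simp only [Set.mem_ofPred_eq] at hω ⊢
      rwa [← sum_congr rfl h]
  rw [measureReal_def, hindep_inc, ENNReal.toReal_mul]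
  congr 2
  exact (identDistrib_sum_Ico hindep hident j k).measure_mem_eq (measurableSet_singleton 0)

end Walk

section GeneratingFunction

variable {s : ℝ}

theorem summable_norm_pow_mul_of_abs_le (hs : |s| < 1) {a : ℕ → ℝ} {C : ℝ}
    (ha : ∀ n, |a n| ≤ C) : Summable fun n => ‖s ^ n * a n‖ := by
  refine .of_nonneg_of_le (fun n => norm_nonneg _) (fun n => ?_)
    ((summable_geometric_of_lt_one (abs_nonneg s) hs).mul_left C)
  rw [norm_mul, norm_pow, Real.norm_eq_abs, Real.norm_eq_abs, mul_comm]
  exact mul_le_mul_of_nonneg_right (ha n) (by positivity)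

theorem tsum_pow_mul_sum_range_mul (hs : |s| < 1) {a b : ℕ → ℝ} {C D : ℝ}
    (ha : ∀ n, |a n| ≤ C) (hb : ∀ n, |b n| ≤ D) :
    ∑' k, s ^ k * ∑ j ∈ range (k + 1), a j * b (k - j) =
      (∑' j, s ^ j * a j) * ∑' m, s ^ m * b m := by
  rw [tsum_mul_tsum_eq_tsum_sum_range_of_summable_norm (summable_norm_pow_mul_of_abs_le hs ha)
    (summable_norm_pow_mul_of_abs_le hs hb)]
  refine tsum_congr fun k => ?_
  rw [mul_sum]
  refine sum_congr rfl fun j hj => ?_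
  rw [← pow_mul_pow_sub s (Nat.lt_succ_iff.mp (mem_range.mp hj))]
  ring

end GeneratingFunction

section GeneratingFunctionOfWalk

variable {Ω : Type*} [MeasurableSpace Ω] {P : Measure Ω} [IsProbabilityMeasure P]
  {τ : ℕ → Ω → ℤ} {s : ℝ}

theorem abs_measureReal_le_one (A : Set Ω) : |P.real A| ≤ 1 := by
  rw [abs_of_nonneg measureReal_nonneg]
  exact measureReal_le_one

theorem integral_hitTime_eq_tsum (hs : |s| < 1) {S : ℕ → Ω → ℤ} (hS : ∀ k, Measurable (S k))
    (x : ℤ) :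
    ∫ ω, (if hitTime S x ω = ⊤ then (0 : ℝ) else s ^ (hitTime S x ω).toNat) ∂P =
      ∑' j, s ^ j * P.real (firstHitAfter S 0 (-x) j) := by
  have hmeas := measurableSet_firstHitAfter (n₀ := 0) (y := -x) hS
  simp_rw [ite_hitTime_eq_tsum_indicator]
  rw [← integral_tsum_of_summable_integral_norm]
  · refine tsum_congr fun j => ?_
    rw [integral_indicator_const _ (hmeas j), smul_eq_mul, mul_comm]
  · exact fun j => (integrable_const _).indicator (hmeas j)
  · refine (summable_norm_pow_mul_of_abs_le hs fun j =>
      abs_measureReal_le_one (P := P) (firstHitAfter S 0 (-x) j)).congr fun j => ?_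
    simp_rw [norm_indicator_eq_indicator_norm]
    rw [integral_indicator_const _ (hmeas j), smul_eq_mul, norm_mul, mul_comm,
      Real.norm_of_nonneg measureReal_nonneg]

theorem tsum_measureReal_walk_eq_mul (hmeas : ∀ n, Measurable (τ n)) (hindep : iIndepFun τ P)
    (hident : ∀ n, IdentDistrib (τ n) (τ 0) P P) (hs : |s| < 1) (y : ℤ) :
    ∑' k, s ^ k * P.real {ω | walk τ k ω = y} =
      (∑' j, s ^ j * P.real (firstHitAfter (walk τ) 0 y j)) *
        ∑' m, s ^ m * P.real {ω | walk τ m ω = 0} := by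
  rw [← tsum_pow_mul_sum_range_mul hs (fun _ => abs_measureReal_le_one _)
    (fun _ => abs_measureReal_le_one _)]
  exact tsum_congr fun k => by
    rw [measureReal_walk_eq_sum (k := k) hmeas hindep hident k.zero_le y]

theorem tsum_measureReal_walk_zero_ne_zero (hmeas : ∀ n, Measurable (τ n))
    (hindep : iIndepFun τ P) (hident : ∀ n, IdentDistrib (τ n) (τ 0) P P) (hs : |s| < 1) :
    ∑' m, s ^ m * P.real {ω | walk τ m ω = 0} ≠ 0 := by
  set b : ℕ → ℝ := fun m => P.real {ω | walk τ m ω = 0}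
  set c : ℕ → ℝ := fun j => P.real (firstHitAfter (walk τ) 1 0 j)
  have hconv (k : ℕ) : ∑ j ∈ range (k + 1), c j * b (k - j) = b k - if k = 0 then 1 else 0 := by
    rcases k with _ | k
    · simp [c, b, firstHitAfter_eq_empty]
    · simp [c, b, measureReal_walk_eq_sum hmeas hindep hident (Nat.succ_pos k) 0]
  have hreturn : ∑' m, s ^ m * b m = 1 + (∑' j, s ^ j * c j) * ∑' m, s ^ m * b m := by
    have hδ : HasSum (fun k => s ^ k * if k = 0 then (1 : ℝ) else 0) 1 := by
      convert hasSum_ite_eq 0 (1 : ℝ) using 2 with k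
      split_ifs <;> simp_all
    rw [← tsum_pow_mul_sum_range_mul (a := c) (b := b) hs (fun _ => abs_measureReal_le_one _)
      (fun _ => abs_measureReal_le_one _)]
    simp_rw [hconv, mul_sub]
    rw [(summable_norm_pow_mul_of_abs_le hs fun _ => abs_measureReal_le_one _).of_norm.tsum_sub
      hδ.summable, hδ.tsum_eq]
    ring
  intro h
  rw [h, mul_zero, add_zero] at hreturn
  exact zero_ne_one hreturn

end GeneratingFunctionOfWalk

/-- With `(τ n)` i.i.d. integer-valued, `S` the associated random walk,
`σ_x` the first hitting time of `0` by the walk started at `x`, and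
`u_s(y) = ∑_{k ≥ 0} s^k P{S k = -y}`, for every `x ∈ ℤ` and `|s| < 1`,
`E[s^{σ_x} 1_{σ_x < ∞}] = u_s(x) / u_s(0)`. -/
theorem statement2
    {Ω : Type*} [MeasurableSpace Ω] (P : Measure Ω) [IsProbabilityMeasure P]
    (τ : ℕ → Ω → ℤ) (hmeas : ∀ n, Measurable (τ n))
    (hindep : iIndepFun τ P)
    (hident : ∀ n, IdentDistrib (τ n) (τ 0) P P)
    (S : ℕ → Ω → ℤ) (hS : ∀ k ω, S k ω = ∑ i ∈ Finset.range k, τ i ω)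
    (x : ℤ) (s : ℝ) (hs : |s| < 1) :
    (∫ ω, (if hitTime S x ω = ⊤ then (0 : ℝ) else s ^ (hitTime S x ω).toNat) ∂P) =
      (∑' k : ℕ, s ^ k * (P {ω | S k ω = -x}).toReal) /
        (∑' k : ℕ, s ^ k * (P {ω | S k ω = 0}).toReal) := by
  obtain rfl : S = walk τ := funext₂ hS
  simp_rw [← measureReal_def]
  rw [integral_hitTime_eq_tsum hs (measurable_walk hmeas),
    eq_div_iff (tsum_measureReal_walk_zero_ne_zero hmeas hindep hident hs)]
  exact (tsum_measureReal_walk_eq_mul hmeas hindep hident hs (-x)).symm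
end

section
/- Let α ∈ (1,2) and δ ∈ (0, min(α−1, 2−α)). Then there exists a constant C > 0 such that for every b ∈ ℝ with 0 < |b| ≤ 1, ∫_ℝ |sin(bθ)| / min(|θ|^{α+δ}, |θ|^{α−δ}) dθ ≤ C |b|^{α−1−δ}. -/
/-!
Since `|sin (b θ)| ≤ min |b θ| 1` and
`1 / min (|θ|^(α+δ)) (|θ|^(α-δ)) ≤ |θ|^(-(α+δ)) + |θ|^(-(α-δ))`, the integrand is dominated
by a sum of two functions `min |b θ| 1 * |θ| ^ (-s)` with `1 < s < 2`. The substitution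
`θ ↦ θ / b` turns the integral of each of them into `|b| ^ (s - 1)` times the (finite) integral
of `min |θ| 1 * |θ| ^ (-s)`, and `|b| ^ (α + δ - 1) ≤ |b| ^ (α - 1 - δ)` for `|b| ≤ 1`.
-/

open MeasureTheory Set Real

lemma integrable_comp_abs_of_integrableOn_Ioi {E : Type*} [NormedAddCommGroup E] {f : ℝ → E}
    (hf : IntegrableOn f (Ioi 0)) :
    Integrable fun x => f |x| := by
  have hpos : IntegrableOn (fun x => f |x|) (Ioi 0) :=
    hf.congr_fun (fun x hx => by rw [abs_of_pos hx]) measurableSet_Ioi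
  have hneg : IntegrableOn (fun x => f |x|) (Iic 0) := by
    have hneg_emb : MeasurableEmbedding fun x : ℝ => -x := (Homeomorph.neg ℝ).measurableEmbedding
    rw [← Measure.map_neg_eq_self (volume : Measure ℝ), hneg_emb.integrableOn_map_iff]
    simp_rw [Function.comp_def, abs_neg, neg_preimage, neg_Iic, neg_zero]
    exact (integrableOn_Ici_iff_integrableOn_Ioi).mpr hpos
  simpa only [Iic_union_Ioi, integrableOn_univ] using hneg.union hpos

section Kernel

variable {s : ℝ}

lemma integrableOn_Ioi_min_one_mul_rpow_neg (h1 : 1 < s) (h2 : s < 2) :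
    IntegrableOn (fun t : ℝ => min t 1 * t ^ (-s)) (Ioi 0) := by
  have hlow : IntegrableOn (fun t : ℝ => min t 1 * t ^ (-s)) (Ioc 0 1) := by
    refine (intervalIntegral.intervalIntegrable_rpow' (r := -s + 1) (a := 0) (b := 1)
      (by linarith)).1.congr_fun (fun t ht => ?_) measurableSet_Ioc
    dsimp only
    rw [min_eq_left ht.2, rpow_add_one ht.1.ne', mul_comm]
  have hhigh : IntegrableOn (fun t : ℝ => min t 1 * t ^ (-s)) (Ioi 1) :=
    (integrableOn_Ioi_rpow_of_lt (a := -s) (by linarith) one_pos).congr_fun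
      (fun t ht => by rw [min_eq_right (le_of_lt ht), one_mul]) measurableSet_Ioi
  rw [← Ioc_union_Ioi_eq_Ioi zero_le_one]
  exact hlow.union hhigh

lemma integrable_min_abs_one_mul_abs_rpow_neg (h1 : 1 < s) (h2 : s < 2) :
    Integrable fun θ : ℝ => min |θ| 1 * |θ| ^ (-s) :=
  integrable_comp_abs_of_integrableOn_Ioi (integrableOn_Ioi_min_one_mul_rpow_neg h1 h2)

lemma min_abs_mul_one_mul_abs_rpow_neg_eq {b : ℝ} (hb : b ≠ 0) (θ : ℝ) :
    min |b * θ| 1 * |θ| ^ (-s) = |b| ^ s * (min |b * θ| 1 * |b * θ| ^ (-s)) := by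
  have hbs : |b| ^ s * |b| ^ (-s) = 1 := by
    rw [← rpow_add (abs_pos.2 hb), add_neg_cancel, rpow_zero]
  rw [abs_mul b θ, mul_rpow (abs_nonneg b) (abs_nonneg θ)]
  linear_combination (-(min (|b| * |θ|) 1 * |θ| ^ (-s))) * hbs

lemma integrable_min_abs_mul_one_mul_abs_rpow_neg (h1 : 1 < s) (h2 : s < 2) {b : ℝ}
    (hb : b ≠ 0) : Integrable fun θ : ℝ => min |b * θ| 1 * |θ| ^ (-s) := by
  simp_rw [min_abs_mul_one_mul_abs_rpow_neg_eq hb]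
  exact ((integrable_min_abs_one_mul_abs_rpow_neg h1 h2).comp_mul_left' hb).const_mul _

lemma integral_min_abs_mul_one_mul_abs_rpow_neg {b : ℝ} (hb : b ≠ 0) :
    ∫ θ : ℝ, min |b * θ| 1 * |θ| ^ (-s) =
      |b| ^ (s - 1) * ∫ θ : ℝ, min |θ| 1 * |θ| ^ (-s) := by
  simp_rw [min_abs_mul_one_mul_abs_rpow_neg_eq hb]
  rw [integral_const_mul, Measure.integral_comp_mul_left (fun θ => min |θ| 1 * |θ| ^ (-s)),
    smul_eq_mul, abs_inv, ← mul_assoc, rpow_sub_one (abs_pos.2 hb).ne', div_eq_mul_inv]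

end Kernel

lemma inv_min_rpow_le {x : ℝ} (hx : 0 ≤ x) (a c : ℝ) :
    (min (x ^ a) (x ^ c))⁻¹ ≤ x ^ (-a) + x ^ (-c) := by
  rw [rpow_neg hx, rpow_neg hx]
  rcases min_choice (x ^ a) (x ^ c) with h | h <;> rw [h]
  · exact le_add_of_nonneg_right (by positivity)
  · exact le_add_of_nonneg_left (by positivity)

lemma abs_sin_mul_div_min_rpow_le (b θ a c : ℝ) :
    |sin (b * θ)| / min (|θ| ^ a) (|θ| ^ c) ≤
      min |b * θ| 1 * |θ| ^ (-a) + min |b * θ| 1 * |θ| ^ (-c) := by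
  rw [div_eq_mul_inv, ← mul_add]
  exact mul_le_mul (le_min abs_sin_le_abs (abs_sin_le_one _)) (inv_min_rpow_le (abs_nonneg θ) a c)
    (by positivity) (by positivity)

/-- Let `α ∈ (1,2)` and `δ ∈ (0, min(α-1, 2-α))`. Then there is `C > 0`
such that for every `b` with `0 < |b| ≤ 1`,
`∫_ℝ |sin(bθ)| / min(|θ|^{α+δ}, |θ|^{α-δ}) dθ ≤ C |b|^{α-1-δ}`
(the integrand being integrable). -/
theorem statement10
    (α δ : ℝ) (hα : α ∈ Set.Ioo (1 : ℝ) 2) (hδ₀ : 0 < δ) (hδ : δ < min (α - 1) (2 - α)) :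
    ∃ C : ℝ, 0 < C ∧ ∀ b : ℝ, 0 < |b| → |b| ≤ 1 →
      Integrable (fun θ : ℝ =>
        |Real.sin (b * θ)| / min (|θ| ^ (α + δ)) (|θ| ^ (α - δ))) volume ∧
      (∫ θ : ℝ, |Real.sin (b * θ)| / min (|θ| ^ (α + δ)) (|θ| ^ (α - δ))) ≤
        C * |b| ^ (α - 1 - δ) := by
  obtain ⟨hα1, hα2⟩ := hα
  have hδ1 : δ < α - 1 := hδ.trans_le (min_le_left _ _)
  have hδ2 : δ < 2 - α := hδ.trans_le (min_le_right _ _)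
  set K : ℝ → ℝ := fun s => ∫ θ : ℝ, min |θ| 1 * |θ| ^ (-s)
  have hK (s : ℝ) : 0 ≤ K s := integral_nonneg fun θ => by positivity
  refine ⟨K (α + δ) + K (α - δ) + 1, by positivity, fun b hb hb1 => ?_⟩
  have hb0 : b ≠ 0 := abs_pos.1 hb
  have hF₁ :=
    integrable_min_abs_mul_one_mul_abs_rpow_neg (s := α + δ) (by linarith) (by linarith) hb0
  have hF₂ :=
    integrable_min_abs_mul_one_mul_abs_rpow_neg (s := α - δ) (by linarith) (by linarith) hb0
  have hf : Integrable fun θ : ℝ => |sin (b * θ)| / min (|θ| ^ (α + δ)) (|θ| ^ (α - δ)) :=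
    (hF₁.add hF₂).mono' (by fun_prop : Measurable _).aestronglyMeasurable (ae_of_all _ fun θ => by
      rw [norm_of_nonneg (by positivity)]
      exact abs_sin_mul_div_min_rpow_le b θ _ _)
  refine ⟨hf, ?_⟩
  have hpow : |b| ^ (α + δ - 1) ≤ |b| ^ (α - 1 - δ) :=
    rpow_le_rpow_of_exponent_ge hb hb1 (by linarith)
  calc (∫ θ : ℝ, |sin (b * θ)| / min (|θ| ^ (α + δ)) (|θ| ^ (α - δ)))
      ≤ ∫ θ : ℝ, (min |b * θ| 1 * |θ| ^ (-(α + δ)) + min |b * θ| 1 * |θ| ^ (-(α - δ))) :=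
        integral_mono hf (hF₁.add hF₂) fun θ => abs_sin_mul_div_min_rpow_le b θ _ _
    _ = |b| ^ (α + δ - 1) * K (α + δ) + |b| ^ (α - 1 - δ) * K (α - δ) := by
        rw [integral_add hF₁ hF₂, integral_min_abs_mul_one_mul_abs_rpow_neg hb0,
          integral_min_abs_mul_one_mul_abs_rpow_neg hb0, sub_right_comm α δ 1]
    _ ≤ (K (α + δ) + K (α - δ) + 1) * |b| ^ (α - 1 - δ) := by
        nlinarith [hK (α + δ), hK (α - δ), rpow_nonneg hb.le (α - 1 - δ)]
end

section
/- Under hypotheses (H0)–(H3), lim_{v→∞} sup_{x∈ℝ} | ∫_{−πa(v)}^{πa(v)} e^{iθx} / (λ + v(1 − ψ(θ/a(v)))) dθ − ∫_ℝ e^{iθx} / (λ + |θ|^α) dθ | = 0. -/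
open MeasureTheory Filter Set Topology

/-!
Write `D_v(θ) = (λ + v(1 - ψ(θ/a(v))))⁻¹` and `G(θ) = (λ + |θ|^α)⁻¹`. Since `|e^{iθx}| = 1`,
the difference is bounded, uniformly in `x`, by
`∫ ‖1_{|θ| ≤ ε a(v)} D_v(θ) - G(θ)‖ dθ + 2π a(v) / (m v)`.
On `ε a(v) < |θ| ≤ π a(v)`, (H3) gives `|D_v| ≤ 1/(m v)`, and `a(v)/v → 0` disposes of that range.
On `|θ| ≤ ε a(v)`, `Re ψ ≤ 1` gives `|λ + v(1 - ψ)| ≥ max(λ, v |1 - ψ|)`, so by (H2) `D_v`,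
like `G`, is dominated by a multiple of `(1 + |θ|)^{-(α-δ)}`, integrable as `α - δ > 1`;
(H1) gives `D_v → G` pointwise, and dominated convergence finishes.
-/

namespace Complex

lemma le_norm_ofReal_add {lam : ℝ} {w : ℂ} (hw : 0 ≤ w.re) : lam ≤ ‖(lam : ℂ) + w‖ :=
  calc lam ≤ ((lam : ℂ) + w).re := by simpa using hw
    _ ≤ _ := re_le_norm _

lemma ofReal_add_ne_zero {lam : ℝ} {w : ℂ} (hlam : 0 < lam) (hw : 0 ≤ w.re) :
    (lam : ℂ) + w ≠ 0 :=
  norm_pos_iff.1 (hlam.trans_le (le_norm_ofReal_add hw))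

lemma norm_le_norm_ofReal_add {lam : ℝ} {w : ℂ} (hlam : 0 ≤ lam) (hw : 0 ≤ w.re) :
    ‖w‖ ≤ ‖(lam : ℂ) + w‖ := by
  rw [← sq_le_sq₀ (norm_nonneg _) (norm_nonneg _), Complex.sq_norm, Complex.sq_norm,
    normSq_apply, normSq_apply]
  simp only [add_re, add_im, ofReal_re, ofReal_im, zero_add]
  nlinarith

lemma re_ofReal_mul_one_sub_nonneg {v : ℝ} {z : ℂ} (hv : 0 ≤ v) (hz : z.re ≤ 1) :
    0 ≤ ((v : ℂ) * (1 - z)).re := by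
  simpa using mul_nonneg hv (sub_nonneg.2 hz)

lemma mul_norm_one_sub_le_norm_ofReal_add {lam v : ℝ} {z : ℂ} (hlam : 0 ≤ lam) (hv : 0 ≤ v)
    (hz : z.re ≤ 1) : v * ‖1 - z‖ ≤ ‖(lam : ℂ) + (v : ℂ) * (1 - z)‖ := by
  simpa [abs_of_nonneg hv] using
    norm_le_norm_ofReal_add hlam (re_ofReal_mul_one_sub_nonneg hv hz)

lemma norm_exp_I_mul_ofReal_mul_ofReal (θ x : ℝ) : ‖exp (I * θ * x)‖ = 1 := by
  simpa [mul_comm, mul_left_comm] using norm_exp_ofReal_mul_I (θ * x)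

lemma norm_inv_le_of_lower_bounds {z : ℂ} {L C r t : ℝ} (hL : 0 < L) (hC : 0 < C) (hr : 0 ≤ r)
    (ht : 0 ≤ t) (hzL : L ≤ ‖z‖) (hzC : 1 ≤ t → C * t ^ r ≤ ‖z‖) :
    ‖z⁻¹‖ ≤ 2 ^ r / min L C * (1 + t) ^ (-r) := by
  have key : min L C * (1 + t) ^ r ≤ 2 ^ r * ‖z‖ := by
    rcases le_total t 1 with h | h
    · calc min L C * (1 + t) ^ r ≤ L * 2 ^ r := by
            gcongr
            · exact min_le_left _ _
            · linarith
        _ ≤ 2 ^ r * ‖z‖ := by rw [mul_comm]; gcongr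
    · calc min L C * (1 + t) ^ r ≤ C * (2 * t) ^ r := by
            gcongr
            · exact min_le_right _ _
            · linarith
        _ = 2 ^ r * (C * t ^ r) := by rw [Real.mul_rpow zero_le_two ht]; ring
        _ ≤ 2 ^ r * ‖z‖ := by gcongr; exact hzC h
  have hz : 0 < ‖z‖ := hL.trans_le hzL
  rw [norm_inv, Real.rpow_neg (by linarith), ← div_eq_mul_inv, div_div,
    le_div_iff₀ (by positivity)]
  calc ‖z‖⁻¹ * (min L C * (1 + t) ^ r) ≤ ‖z‖⁻¹ * (2 ^ r * ‖z‖) := by gcongr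
    _ = 2 ^ r := by field_simp

end Complex

lemma integrable_one_add_abs_rpow_neg {r : ℝ} (hr : 1 < r) :
    Integrable (fun θ : ℝ => (1 + |θ|) ^ (-r)) := by
  simpa only [Real.norm_eq_abs] using
    integrable_one_add_norm (E := ℝ) (μ := volume) (by simpa using hr)

lemma intervalIntegral_eq_integral_indicator_add_setIntegral_sdiff {E : Type*}
    [NormedAddCommGroup E] [NormedSpace ℝ E] [CompleteSpace E] {f : ℝ → E} {a b : ℝ}
    {S : Set ℝ} (hab : a ≤ b) (hS : MeasurableSet S) (hSab : S ⊆ Ioc a b)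
    (hf : IntegrableOn f (Ioc a b)) :
    ∫ θ in a..b, f θ = (∫ θ, S.indicator f θ) + ∫ θ in Ioc a b \ S, f θ := by
  rw [intervalIntegral.integral_of_le hab, ← integral_inter_add_sdiff hS hf,
    inter_eq_right.2 hSab, ← integral_indicator hS]

lemma norm_integral_indicator_mul_sub_integral_mul_le {X : Type*} [MeasurableSpace X]
    {μ : Measure X} {e f g : X → ℂ} {S : Set X} (hS : MeasurableSet S) (he : ∀ x, ‖e x‖ = 1)
    (hf : IntegrableOn (fun x => e x * f x) S μ) (hg : Integrable (fun x => e x * g x) μ) :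
    ‖∫ x, S.indicator (fun x => e x * f x) x ∂μ - ∫ x, e x * g x ∂μ‖
      ≤ ∫ x, ‖S.indicator f x - g x‖ ∂μ := by
  rw [← integral_sub ((integrable_indicator_iff hS).2 hf) hg]
  refine (norm_integral_le_integral_norm _).trans_eq (integral_congr_ae (ae_of_all _ fun x => ?_))
  by_cases hx : x ∈ S <;> simp [hx, ← mul_sub, he]

noncomputable def stableResolventSymbol (lam α θ : ℝ) : ℂ := ((lam : ℂ) + ((|θ| ^ α : ℝ) : ℂ))⁻¹

noncomputable def resolventSymbol (lam : ℝ) (ψ : ℝ → ℂ) (a : ℝ → ℝ) (v θ : ℝ) : ℂ :=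
  ((lam : ℂ) + (v : ℂ) * (1 - ψ (θ / a v)))⁻¹

section ResolventSymbols

variable {lam α v : ℝ} {ψ : ℝ → ℂ} {a : ℝ → ℝ}

lemma continuous_stableResolventSymbol (hlam : 0 < lam) (hα : 0 ≤ α) :
    Continuous (stableResolventSymbol lam α) :=
  Continuous.inv₀ (by fun_prop (disch := exact hα)) fun θ =>
    Complex.ofReal_add_ne_zero hlam (by simp [Real.rpow_nonneg])

lemma norm_stableResolventSymbol_le (hlam : 0 < lam) {r : ℝ} (hr : 0 ≤ r) (hrα : r ≤ α)
    (θ : ℝ) : ‖stableResolventSymbol lam α θ‖ ≤ 2 ^ r / min lam 1 * (1 + |θ|) ^ (-r) := by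
  have hre : 0 ≤ (((|θ| ^ α : ℝ)) : ℂ).re := by simp [Real.rpow_nonneg]
  refine Complex.norm_inv_le_of_lower_bounds hlam one_pos hr (abs_nonneg θ)
    (Complex.le_norm_ofReal_add hre) fun hθ => ?_
  calc 1 * |θ| ^ r ≤ ‖(((|θ| ^ α : ℝ)) : ℂ)‖ := by
        rw [one_mul, Complex.norm_real, Real.norm_of_nonneg (by positivity)]
        exact Real.rpow_le_rpow_of_exponent_le hθ hrα
    _ ≤ _ := Complex.norm_le_norm_ofReal_add hlam.le hre

lemma integrable_stableResolventSymbol (hlam : 0 < lam) (hα : 1 < α) :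
    Integrable (stableResolventSymbol lam α) :=
  ((integrable_one_add_abs_rpow_neg hα).const_mul _).mono'
    (continuous_stableResolventSymbol hlam (by linarith)).aestronglyMeasurable
    (ae_of_all _ (norm_stableResolventSymbol_le hlam (by linarith) le_rfl))

lemma continuous_resolventSymbol (hψ : Continuous ψ) (hψre : ∀ θ, (ψ θ).re ≤ 1)
    (hlam : 0 < lam) (hv : 0 ≤ v) : Continuous (resolventSymbol lam ψ a v) :=
  Continuous.inv₀ (by fun_prop) fun θ =>
    Complex.ofReal_add_ne_zero hlam (Complex.re_ofReal_mul_one_sub_nonneg hv (hψre _))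

lemma norm_resolventSymbol_le_of_lower_bound {c δ θ : ℝ} (hψre : ∀ θ, (ψ θ).re ≤ 1)
    (hlam : 0 < lam) (hv : 0 ≤ v) (hc : 0 < c) (hδ : 0 ≤ δ) (hδα : δ ≤ α)
    (hlower : c * min (|θ| ^ (α + δ)) (|θ| ^ (α - δ)) ≤ v * ‖1 - ψ (θ / a v)‖) :
    ‖resolventSymbol lam ψ a v θ‖ ≤ 2 ^ (α - δ) / min lam c * (1 + |θ|) ^ (-(α - δ)) := by
  refine Complex.norm_inv_le_of_lower_bounds hlam hc (by linarith) (abs_nonneg θ)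
    (Complex.le_norm_ofReal_add (Complex.re_ofReal_mul_one_sub_nonneg hv (hψre _)))
    fun hθ => ?_
  calc c * |θ| ^ (α - δ) = c * min (|θ| ^ (α + δ)) (|θ| ^ (α - δ)) := by
        rw [min_eq_right (Real.rpow_le_rpow_of_exponent_le hθ (by linarith))]
    _ ≤ v * ‖1 - ψ (θ / a v)‖ := hlower
    _ ≤ _ := Complex.mul_norm_one_sub_le_norm_ofReal_add hlam.le hv (hψre _)

lemma norm_resolventSymbol_le_of_le_norm {m θ : ℝ} (hψre : ∀ θ, (ψ θ).re ≤ 1)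
    (hlam : 0 ≤ lam) (hv : 0 < v) (hm : 0 < m) (hψm : m ≤ ‖1 - ψ (θ / a v)‖) :
    ‖resolventSymbol lam ψ a v θ‖ ≤ (v * m)⁻¹ := by
  rw [resolventSymbol, norm_inv]
  exact inv_anti₀ (by positivity) ((mul_le_mul_of_nonneg_left hψm hv.le).trans
    (Complex.mul_norm_one_sub_le_norm_ofReal_add hlam hv.le (hψre _)))

lemma tendsto_resolventSymbol (hlam : 0 < lam) {θ : ℝ}
    (hconv : Tendsto (fun v : ℝ => (v : ℂ) * (1 - ψ (θ / a v))) atTop (𝓝 ((|θ| ^ α : ℝ) : ℂ))) :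
    Tendsto (fun v => resolventSymbol lam ψ a v θ) atTop (𝓝 (stableResolventSymbol lam α θ)) :=
  (tendsto_const_nhds.add hconv).inv₀
    (Complex.ofReal_add_ne_zero hlam (by simp [Real.rpow_nonneg]))

lemma norm_indicator_resolventSymbol_le {c δ ε θ : ℝ} (hψre : ∀ θ, (ψ θ).re ≤ 1)
    (hlam : 0 < lam) (hv : 0 ≤ v) (hc : 0 < c) (hδ : 0 ≤ δ) (hδα : δ ≤ α)
    (H2 : ∀ θ : ℝ, |θ| ≤ ε * a v →
      c * min (|θ| ^ (α + δ)) (|θ| ^ (α - δ)) ≤ v * ‖1 - ψ (θ / a v)‖) :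
    ‖(Icc (-(ε * a v)) (ε * a v)).indicator (resolventSymbol lam ψ a v) θ‖
      ≤ 2 ^ (α - δ) / min lam c * (1 + |θ|) ^ (-(α - δ)) := by
  by_cases hθ : θ ∈ Icc (-(ε * a v)) (ε * a v)
  · rw [indicator_of_mem hθ]
    exact norm_resolventSymbol_le_of_lower_bound hψre hlam hv hc hδ hδα (H2 θ (abs_le.2 hθ))
  · rw [indicator_of_notMem hθ, norm_zero]
    positivity

end ResolventSymbols

section Convergence

variable {lam α c δ ε v₀ : ℝ} {ψ : ℝ → ℂ} {a : ℝ → ℝ}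

lemma tendsto_integral_norm_indicator_resolventSymbol_sub (hlam : 0 < lam) (hc : 0 < c)
    (hδ : 0 ≤ δ) (hαδ : 1 < α - δ) (hε : 0 < ε) (hψ : Continuous ψ)
    (hψre : ∀ θ, (ψ θ).re ≤ 1) (hatop : Tendsto a atTop atTop)
    (hconv : ∀ θ, Tendsto (fun v : ℝ => (v : ℂ) * (1 - ψ (θ / a v))) atTop
      (𝓝 ((|θ| ^ α : ℝ) : ℂ)))
    (H2 : ∀ v : ℝ, v₀ ≤ v → ∀ θ : ℝ, |θ| ≤ ε * a v →
      c * min (|θ| ^ (α + δ)) (|θ| ^ (α - δ)) ≤ v * ‖1 - ψ (θ / a v)‖) :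
    Tendsto (fun v => ∫ θ, ‖(Icc (-(ε * a v)) (ε * a v)).indicator (resolventSymbol lam ψ a v) θ
      - stableResolventSymbol lam α θ‖) atTop (𝓝 0) := by
  set F : ℝ → ℝ → ℝ := fun v θ => ‖(Icc (-(ε * a v)) (ε * a v)).indicator
    (resolventSymbol lam ψ a v) θ - stableResolventSymbol lam α θ‖
  have hG := continuous_stableResolventSymbol hlam (α := α) (by linarith)
  have hF_meas : ∀ᶠ v in atTop, AEStronglyMeasurable (F v) := by
    filter_upwards [eventually_ge_atTop 0] with v hv
    exact (((continuous_resolventSymbol hψ hψre hlam hv).measurable.indicator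
      measurableSet_Icc).sub hG.measurable).norm.aestronglyMeasurable
  have h_bound : ∀ᶠ v in atTop, ∀ θ, ‖F v θ‖
      ≤ (2 ^ (α - δ) / min lam c + 2 ^ (α - δ) / min lam 1) * (1 + |θ|) ^ (-(α - δ)) := by
    filter_upwards [eventually_ge_atTop v₀, eventually_ge_atTop 0] with v hv₀ hv θ
    rw [norm_norm, add_mul]
    exact (norm_sub_le _ _).trans (add_le_add
      (norm_indicator_resolventSymbol_le hψre hlam hv hc hδ (by linarith) (H2 v hv₀))
      (norm_stableResolventSymbol_le hlam (by linarith) (by linarith) θ))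
  have h_lim : ∀ θ, Tendsto (F · θ) atTop (𝓝 0) := by
    intro θ
    have hθ : ∀ᶠ v in atTop, θ ∈ Icc (-(ε * a v)) (ε * a v) := by
      filter_upwards [hatop.eventually_ge_atTop (|θ| / ε)] with v hv
      exact abs_le.1 (by rwa [div_le_iff₀' hε] at hv)
    have := ((tendsto_resolventSymbol hlam (hconv θ)).sub_const
      (stableResolventSymbol lam α θ)).norm
    rw [sub_self, norm_zero] at this
    exact this.congr' (by filter_upwards [hθ] with v hv; simp only [F, indicator_of_mem hv])
  simpa using tendsto_integral_filter_of_dominated_convergence _ hF_meas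
    (h_bound.mono fun v h => ae_of_all _ h)
    ((integrable_one_add_abs_rpow_neg hαδ).const_mul _) (ae_of_all _ h_lim)

end Convergence

section Estimate

variable {lam α ε v m : ℝ} {ψ : ℝ → ℂ} {a : ℝ → ℝ}

lemma norm_setIntegral_exp_mul_resolventSymbol_le (x : ℝ) (hlam : 0 ≤ lam)
    (hψre : ∀ θ, (ψ θ).re ≤ 1) (hv : 0 < v) (hav : 0 < a v) (hm : 0 < m)
    (H3 : ∀ θ : ℝ, ε ≤ |θ| → |θ| ≤ Real.pi → m ≤ ‖1 - ψ θ‖) :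
    ‖∫ θ in Ioc (-(Real.pi * a v)) (Real.pi * a v) \ Icc (-(ε * a v)) (ε * a v),
        Complex.exp (Complex.I * θ * x) * resolventSymbol lam ψ a v θ‖
      ≤ 2 * Real.pi / m * (a v / v) := by
  have hbound : ∀ θ ∈ Ioc (-(Real.pi * a v)) (Real.pi * a v) \ Icc (-(ε * a v)) (ε * a v),
      ‖Complex.exp (Complex.I * θ * x) * resolventSymbol lam ψ a v θ‖ ≤ (v * m)⁻¹ := by
    rintro θ ⟨⟨hθl, hθr⟩, hθS⟩
    rw [norm_mul, Complex.norm_exp_I_mul_ofReal_mul_ofReal, one_mul]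
    refine norm_resolventSymbol_le_of_le_norm hψre hlam hv hm (H3 _ ?_ ?_) <;>
      rw [abs_div, abs_of_pos hav]
    · rw [le_div_iff₀ hav]
      by_contra h
      exact hθS (abs_le.1 (not_le.1 h).le)
    · rw [div_le_iff₀ hav]
      exact abs_le.2 ⟨by linarith, hθr⟩
  calc _ ≤ (v * m)⁻¹ * volume.real
          (Ioc (-(Real.pi * a v)) (Real.pi * a v) \ Icc (-(ε * a v)) (ε * a v)) :=
        norm_setIntegral_le_of_norm_le_const
          ((measure_mono sdiff_subset).trans_lt measure_Ioc_lt_top) hbound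
    _ ≤ (v * m)⁻¹ * volume.real (Ioc (-(Real.pi * a v)) (Real.pi * a v)) := by
        gcongr
        · exact measure_Ioc_lt_top.ne
        · exact sdiff_subset
    _ = 2 * Real.pi / m * (a v / v) := by
        rw [Real.volume_real_Ioc_of_le (by nlinarith [Real.pi_pos])]
        field_simp
        ring

lemma norm_integral_sub_integral_le (x : ℝ) (hlam : 0 < lam) (hα : 1 < α) (hψ : Continuous ψ)
    (hψre : ∀ θ, (ψ θ).re ≤ 1) (hv : 0 < v) (hav : 0 < a v) (hε : ε ∈ Ioo 0 Real.pi)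
    (hm : 0 < m) (H3 : ∀ θ : ℝ, ε ≤ |θ| → |θ| ≤ Real.pi → m ≤ ‖1 - ψ θ‖) :
    ‖(∫ θ in (-(Real.pi * a v))..(Real.pi * a v),
          Complex.exp (Complex.I * θ * x) / ((lam : ℂ) + (v : ℂ) * (1 - ψ (θ / a v)))) -
        ∫ θ : ℝ, Complex.exp (Complex.I * θ * x) / ((lam : ℂ) + ((|θ| ^ α : ℝ) : ℂ))‖
      ≤ (∫ θ, ‖(Icc (-(ε * a v)) (ε * a v)).indicator (resolventSymbol lam ψ a v) θ
          - stableResolventSymbol lam α θ‖) + 2 * Real.pi / m * (a v / v) := by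
  have he (θ : ℝ) := Complex.norm_exp_I_mul_ofReal_mul_ofReal θ x
  have heD : Continuous fun θ : ℝ =>
      Complex.exp (Complex.I * θ * x) * resolventSymbol lam ψ a v θ :=
    (by fun_prop : Continuous fun θ : ℝ => Complex.exp (Complex.I * θ * x)).mul
      (continuous_resolventSymbol hψ hψre hlam hv.le)
  have heG : Integrable fun θ : ℝ =>
      Complex.exp (Complex.I * θ * x) * stableResolventSymbol lam α θ :=
    (integrable_stableResolventSymbol hlam hα).bdd_mul (by fun_prop) (ae_of_all _ (he · |>.le))
  have hSR : Icc (-(ε * a v)) (ε * a v) ⊆ Ioc (-(Real.pi * a v)) (Real.pi * a v) :=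
    Icc_subset_Ioc (by nlinarith [hε.2]) (by nlinarith [hε.2])
  change ‖(∫ θ : ℝ in _.._, Complex.exp (Complex.I * θ * x) * resolventSymbol lam ψ a v θ) -
    ∫ θ : ℝ, Complex.exp (Complex.I * θ * x) * stableResolventSymbol lam α θ‖ ≤ _
  rw [intervalIntegral_eq_integral_indicator_add_setIntegral_sdiff (by nlinarith [hε.1, hε.2])
    measurableSet_Icc hSR heD.integrableOn_Ioc, add_sub_right_comm]
  exact (norm_add_le _ _).trans (add_le_add
    (norm_integral_indicator_mul_sub_integral_mul_le measurableSet_Icc he heD.integrableOn_Icc heG)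
    (norm_setIntegral_exp_mul_resolventSymbol_le x hlam.le hψre hv hav hm H3))

end Estimate

lemma tendsto_ofReal_mul_one_sub_of_uniformOn_compacts {α : ℝ} {ψ : ℝ → ℂ} {a : ℝ → ℝ}
    (H1 : ∀ A : ℝ, 0 < A → ∀ ε' : ℝ, 0 < ε' → ∃ v₁ : ℝ, ∀ v : ℝ, v₁ ≤ v → ∀ θ : ℝ, |θ| ≤ A →
      ‖(v : ℂ) * (1 - ψ (θ / a v)) - ((|θ| ^ α : ℝ) : ℂ)‖ ≤ ε') (θ : ℝ) :
    Tendsto (fun v : ℝ => (v : ℂ) * (1 - ψ (θ / a v))) atTop (𝓝 ((|θ| ^ α : ℝ) : ℂ)) := by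
  refine Metric.tendsto_atTop.2 fun η hη => ?_
  obtain ⟨v₁, hv₁⟩ := H1 (|θ| + 1) (by positivity) (η / 2) (half_pos hη)
  exact ⟨v₁, fun v hv => (dist_eq_norm _ _).trans_lt
    ((hv₁ v hv θ (by linarith)).trans_lt (half_lt_self hη))⟩

theorem statement11_general
    (α lam : ℝ) (hα : α ∈ Set.Ioo (1 : ℝ) 2) (hlam : 0 < lam)
    (a : ℝ → ℝ) (hapos : ∀ v : ℝ, 0 < v → 0 < a v)
    (hatop : Tendsto a atTop atTop)
    (haratio : Tendsto (fun v : ℝ => a v / v) atTop (nhds 0))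
    (ψ : ℝ → ℂ) (hψcont : Continuous ψ) (hψre : ∀ θ : ℝ, (ψ θ).re ≤ 1)
    (H1 : ∀ A : ℝ, 0 < A → ∀ ε' : ℝ, 0 < ε' → ∃ v₁ : ℝ, ∀ v : ℝ, v₁ ≤ v → ∀ θ : ℝ, |θ| ≤ A →
      ‖(v : ℂ) * (1 - ψ (θ / a v)) - ((|θ| ^ α : ℝ) : ℂ)‖ ≤ ε')
    (c δ ε v₀ : ℝ) (hc : 0 < c) (hδ : δ ∈ Set.Ioo (0 : ℝ) (α - 1))
    (hε : ε ∈ Set.Ioo (0 : ℝ) Real.pi)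
    (H2 : ∀ v : ℝ, v₀ ≤ v → ∀ θ : ℝ, |θ| ≤ ε * a v →
      c * min (|θ| ^ (α + δ)) (|θ| ^ (α - δ)) ≤ v * ‖1 - ψ (θ / a v)‖)
    (H3 : ∃ m : ℝ, 0 < m ∧ ∀ θ : ℝ, ε ≤ |θ| → |θ| ≤ Real.pi → m ≤ ‖1 - ψ θ‖) :
    ∀ ε' : ℝ, 0 < ε' → ∃ v₁ : ℝ, ∀ v : ℝ, v₁ ≤ v → ∀ x : ℝ,
      ‖(∫ θ in (-(Real.pi * a v))..(Real.pi * a v),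
          Complex.exp (Complex.I * (θ : ℂ) * (x : ℂ)) /
            ((lam : ℂ) + (v : ℂ) * (1 - ψ (θ / a v)))) -
        ∫ θ : ℝ, Complex.exp (Complex.I * (θ : ℂ) * (x : ℂ)) /
          ((lam : ℂ) + ((|θ| ^ α : ℝ) : ℂ))‖ ≤ ε' := by
  obtain ⟨m, hm, H3⟩ := H3
  have hnear := tendsto_integral_norm_indicator_resolventSymbol_sub hlam hc hδ.1.le
    (by linarith [hδ.2]) hε.1 hψcont hψre hatop
    (tendsto_ofReal_mul_one_sub_of_uniformOn_compacts H1) H2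
  have hfar : Tendsto (fun v => 2 * Real.pi / m * (a v / v)) atTop (𝓝 0) := by
    simpa using haratio.const_mul (2 * Real.pi / m)
  intro ε' hε'
  obtain ⟨v₁, hv₁⟩ := eventually_atTop.1
    (((hnear.add hfar).eventually_le_const (by rwa [add_zero])).and (eventually_gt_atTop 0))
  refine ⟨v₁, fun v hv x => ?_⟩
  obtain ⟨hsmall, hv⟩ := hv₁ v hv
  exact (norm_integral_sub_integral_le x hlam hα.1 hψcont hψre hv (hapos v hv) hε hm H3).trans
    hsmall

/-- Let `α ∈ (1,2)`, `λ > 0`, `a : (0,∞) → (0,∞)` with `a(v) → ∞` and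
`a(v)/v → 0`, and let `ψ : ℝ → ℂ` be continuous with `Re ψ ≤ 1` (H0). Assume:
(H1) `v(1 - ψ(θ/a(v))) → |θ|^α` uniformly on compacts;
(H2) `v|1 - ψ(θ/a(v))| ≥ c min(|θ|^{α+δ}, |θ|^{α-δ})` for `|θ| ≤ ε a(v)` and `v ≥ v₀`;
(H3) `inf{|1 - ψ(θ)| : ε ≤ |θ| ≤ π} > 0`.
Then `sup_{x ∈ ℝ} |∫_{-πa(v)}^{πa(v)} e^{iθx}/(λ + v(1-ψ(θ/a(v)))) dθ
  - ∫_ℝ e^{iθx}/(λ + |θ|^α) dθ| → 0` as `v → ∞`. -/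
theorem statement11
    (α lam : ℝ) (hα : α ∈ Set.Ioo (1 : ℝ) 2) (hlam : 0 < lam)
    (a : ℝ → ℝ) (hapos : ∀ v : ℝ, 0 < v → 0 < a v)
    (hatop : Tendsto a atTop atTop)
    (haratio : Tendsto (fun v : ℝ => a v / v) atTop (nhds 0))
    (ψ : ℝ → ℂ) (hψcont : Continuous ψ) (hψre : ∀ θ : ℝ, (ψ θ).re ≤ 1)
    (H1 : ∀ A : ℝ, 0 < A → ∀ ε' : ℝ, 0 < ε' → ∃ v₁ : ℝ, ∀ v : ℝ, v₁ ≤ v → ∀ θ : ℝ, |θ| ≤ A →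
      ‖(v : ℂ) * (1 - ψ (θ / a v)) - ((|θ| ^ α : ℝ) : ℂ)‖ ≤ ε')
    (c δ ε v₀ : ℝ) (hc : 0 < c) (hδ : δ ∈ Set.Ioo (0 : ℝ) (α - 1))
    (hε : ε ∈ Set.Ioo (0 : ℝ) Real.pi) (hv₀ : 0 < v₀)
    (H2 : ∀ v : ℝ, v₀ ≤ v → ∀ θ : ℝ, |θ| ≤ ε * a v →
      c * min (|θ| ^ (α + δ)) (|θ| ^ (α - δ)) ≤ v * ‖1 - ψ (θ / a v)‖)
    (H3 : ∃ m : ℝ, 0 < m ∧ ∀ θ : ℝ, ε ≤ |θ| → |θ| ≤ Real.pi → m ≤ ‖1 - ψ θ‖) :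
    ∀ ε' : ℝ, 0 < ε' → ∃ v₁ : ℝ, ∀ v : ℝ, v₁ ≤ v → ∀ x : ℝ,
      ‖(∫ θ in (-(Real.pi * a v))..(Real.pi * a v),
          Complex.exp (Complex.I * (θ : ℂ) * (x : ℂ)) /
            ((lam : ℂ) + (v : ℂ) * (1 - ψ (θ / a v)))) -
        ∫ θ : ℝ, Complex.exp (Complex.I * (θ : ℂ) * (x : ℂ)) /
          ((lam : ℂ) + ((|θ| ^ α : ℝ) : ℂ))‖ ≤ ε' :=
  statement11_general α lam hα hlam a hapos hatop haratio ψ hψcont hψre H1 c δ ε v₀ hc hδ hε H2 H3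
end

section
/- For every bounded function f : G → ℝ, every x ∈ G and every real s with |s| < 1, ∑_{k≥0} s^k E_{P_x}[f(Y(k))] = E_{P_x}[∑_{k=0}^{σ−1} s^k f(Y(k))] + E_{P_x}[s^{σ} 1_{σ<∞}] · ∑_{k≥0} s^k E_{P_{x*}}[f(Y(k))], where in the first expectation on the right-hand side the sum runs over all k ∈ ℕ₀ on the event {σ = ∞}. -/
/-!
Write `A x = ∑ sᵏ E_x[f(Y k)]`, `B x` for the generating function of `f` along the path strictly
before the hitting time `σ`, and `R x = E_x[s^σ; σ < ∞]`. Under `P x` the shifted trajectory has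
law `∫ P y dκ(x, y)`, so conditioning on the first step gives, for `x ≠ x*`,
`A = f + s κA`, `B = f + s κB` and `R = s κR`, while `B x* = 0` and `R x* = 1`. Hence
`D = A - B - R · A x*` is bounded, vanishes at `x*` and equals `s κD` elsewhere; as `|s| < 1`,
iterating `|D| ≤ |s| sup |D|` forces `D = 0`, which is the claim.
-/

open MeasureTheory ProbabilityTheory

/-- The first hitting time of `x*` by the trajectory `ω`, valued in `ℕ∞`
(`⊤` if the trajectory never visits `x*`). -/
noncomputable def chainHitTime {G : Type*} (xstar : G) (ω : ℕ → G) : ℕ∞ :=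
  ⨅ (k : ℕ) (_ : ω k = xstar), (k : ℕ∞)

open Filter Topology

section Series

variable {α : Type*} [MeasurableSpace α]

theorem abs_pow_mul_le {s u C : ℝ} (h : |u| ≤ C) (k : ℕ) : |s ^ k * u| ≤ |s| ^ k * C := by
  rw [abs_mul, abs_pow]
  exact mul_le_mul_of_nonneg_left h (by positivity)

theorem abs_integral_le_of_abs_le {μ : Measure α} [IsProbabilityMeasure μ] {f : α → ℝ} {C : ℝ}
    (h : ∀ a, |f a| ≤ C) : |∫ a, f a ∂μ| ≤ C := by
  simpa using norm_integral_le_of_norm_le_const (μ := μ) (f := f) (ae_of_all _ h)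

theorem integral_tsum_of_abs_le {μ : Measure α} [IsFiniteMeasure μ] {F : ℕ → α → ℝ}
    (hF : ∀ k, AEStronglyMeasurable (F k) μ) {C : ℕ → ℝ} (hC : Summable C)
    (hFC : ∀ k a, |F k a| ≤ C k) : ∫ a, ∑' k, F k a ∂μ = ∑' k, ∫ a, F k a ∂μ := by
  refine (integral_tsum_of_summable_integral_norm
    (fun k => .of_bound (hF k) (C k) (ae_of_all _ (hFC k))) ?_).symm
  refine (hC.mul_right (μ.real Set.univ)).of_nonneg_of_le
    (fun k => integral_nonneg fun _ => norm_nonneg _) fun k => (le_abs_self _).trans ?_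
  simpa using norm_integral_le_of_norm_le_const (μ := μ) (f := fun a => ‖F k a‖) (C := C k)
    (ae_of_all _ fun a => by simpa using hFC k a)

theorem integral_tsum_pow_mul {μ : Measure α} [IsFiniteMeasure μ] {F : ℕ → α → ℝ}
    (hF : ∀ k, AEStronglyMeasurable (F k) μ) {C s : ℝ} (hC : ∀ k a, |F k a| ≤ C)
    (hs : |s| < 1) : ∫ a, ∑' k, s ^ k * F k a ∂μ = ∑' k, s ^ k * ∫ a, F k a ∂μ := by
  rw [integral_tsum_of_abs_le (fun k => (hF k).const_mul _)
    ((summable_geometric_of_lt_one (abs_nonneg s) hs).mul_right C)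
    fun k a => abs_pow_mul_le (hC k a) k]
  simp only [integral_const_mul]

theorem summable_pow_mul_of_abs_le {u : ℕ → ℝ} {C s : ℝ} (hu : ∀ k, |u k| ≤ C) (hs : |s| < 1) :
    Summable fun k => s ^ k * u k :=
  .of_norm_bounded ((summable_geometric_of_lt_one (abs_nonneg s) hs).mul_right C)
    fun k => abs_pow_mul_le (hu k) k

theorem abs_tsum_pow_mul_le {u : ℕ → ℝ} {C s : ℝ} (hu : ∀ k, |u k| ≤ C) (hs : |s| < 1) :
    |∑' k, s ^ k * u k| ≤ C * (1 - |s|)⁻¹ := by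
  have hsum := (summable_pow_mul_of_abs_le hu hs).norm
  calc |∑' k, s ^ k * u k| ≤ ∑' k, ‖s ^ k * u k‖ := norm_tsum_le_tsum_norm hsum
    _ ≤ ∑' k, |s| ^ k * C :=
      hsum.tsum_le_tsum (fun k => abs_pow_mul_le (hu k) k)
        ((summable_geometric_of_lt_one (abs_nonneg s) hs).mul_right C)
    _ = C * (1 - |s|)⁻¹ := by
      rw [tsum_mul_right, tsum_geometric_of_lt_one (abs_nonneg s) hs, mul_comm]

theorem tsum_pow_mul_eq_add_integral [DiscreteMeasurableSpace α] {μ : Measure α}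
    [IsProbabilityMeasure μ] {c : ℕ → α → ℝ} {C s : ℝ} (hc : ∀ k a, |c k a| ≤ C) (hs : |s| < 1)
    {u : ℕ → ℝ} (hu : ∀ k, u (k + 1) = ∫ a, c k a ∂μ) :
    ∑' k, s ^ k * u k = u 0 + s * ∫ a, ∑' k, s ^ k * c k a ∂μ := by
  have hu_le (k : ℕ) : |u (k + 1)| ≤ C := hu k ▸ abs_integral_le_of_abs_le (hc k)
  have hsum : Summable fun k => s ^ (k + 1) * u (k + 1) := by
    simpa [pow_succ, mul_assoc, mul_comm s, mul_left_comm s] using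
      (summable_pow_mul_of_abs_le hu_le hs).mul_left s
  rw [tsum_eq_zero_add' hsum,
    integral_tsum_pow_mul (fun k => Measurable.of_discrete.aestronglyMeasurable) hc hs,
    ← tsum_mul_left]
  simp only [pow_zero, one_mul, hu, pow_succ]
  congr 1
  exact tsum_congr fun k => by ring

theorem eq_zero_of_abs_le_mul_abs_integral (κ : Kernel α α) [IsMarkovKernel κ] {D : α → ℝ}
    {C : ℝ} (hC : ∀ a, |D a| ≤ C) {q : ℝ} (hq₀ : 0 ≤ q) (hq : q < 1)
    (h : ∀ a, |D a| ≤ q * |∫ b, D b ∂κ a|) : D = 0 := by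
  have hiter (n : ℕ) : ∀ a, |D a| ≤ q ^ n * C := by
    induction n with
    | zero => simpa using hC
    | succ n ih =>
      intro a
      rw [pow_succ, mul_comm _ q, mul_assoc]
      exact (h a).trans (mul_le_mul_of_nonneg_left (abs_integral_le_of_abs_le ih) hq₀)
  funext a
  have hlim : Tendsto (fun n => q ^ n * C) atTop (𝓝 0) := by
    simpa using (tendsto_pow_atTop_nhds_zero_of_lt_one hq₀ hq).mul_const C
  exact abs_nonpos_iff.1 (ge_of_tendsto' hlim fun n => hiter n a)

theorem eq_add_mul_of_first_step [DiscreteMeasurableSpace α] (κ : Kernel α α) [IsMarkovKernel κ]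
    {A B R f : α → ℝ} {s a b r : ℝ} (hs : |s| < 1) (hA : ∀ x, |A x| ≤ a) (hB : ∀ x, |B x| ≤ b)
    (hR : ∀ x, |R x| ≤ r) {x₀ : α} (hB₀ : B x₀ = 0) (hR₀ : R x₀ = 1)
    (eA : ∀ x ≠ x₀, A x = f x + s * ∫ y, A y ∂κ x) (eB : ∀ x ≠ x₀, B x = f x + s * ∫ y, B y ∂κ x)
    (eR : ∀ x ≠ x₀, R x = s * ∫ y, R y ∂κ x) (x : α) : A x = B x + R x * A x₀ := by
  have hint {u : α → ℝ} {C : ℝ} (hu : ∀ y, |u y| ≤ C) (y : α) : Integrable u (κ y) :=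
    .of_bound Measurable.of_discrete.aestronglyMeasurable C (ae_of_all _ hu)
  set D : α → ℝ := fun y => A y - B y - R y * A x₀
  have hD (y : α) : |D y| ≤ a + b + r * |A x₀| := by
    have h₁ := abs_sub (A y - B y) (R y * A x₀)
    have h₂ := abs_sub (A y) (B y)
    rw [abs_mul] at h₁
    nlinarith [hA y, hB y, hR y, abs_nonneg (A x₀)]
  have hstep (y : α) : |D y| ≤ |s| * |∫ z, D z ∂κ y| := by
    by_cases hy : y = x₀
    · simp only [D, hy, hB₀, hR₀, sub_zero, one_mul, sub_self, abs_zero]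
      positivity
    · have hDy : D y = s * ∫ z, D z ∂κ y := by
        simp only [D]
        rw [integral_sub (f := fun z => A z - B z) ((hint hA y).sub (hint hB y))
          ((hint hR y).mul_const _), integral_sub (hint hA y) (hint hB y), integral_mul_const,
          eA y hy, eB y hy, eR y hy]
        ring
      rw [hDy, abs_mul]
  have := congrFun (eq_zero_of_abs_le_mul_abs_integral κ hD (abs_nonneg s) hs hstep) x
  simp only [D, Pi.zero_apply] at this
  linarith

end Series

namespace MeasureTheory.Measure

theorem ext_of_map_frestrictLe {X : ℕ → Type*} [∀ n, MeasurableSpace (X n)]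
    {μ ν : Measure (∀ n, X n)} [IsFiniteMeasure μ]
    (h : ∀ n, μ.map (Preorder.frestrictLe n) = ν.map (Preorder.frestrictLe n)) : μ = ν := by
  have hμ : IsProjectiveLimit μ (fun I : Finset ℕ => μ.map I.restrict) := fun _ => rfl
  have hproj := isProjectiveMeasureFamily_map_restrict (X := fun t (ω : ∀ n, X n) => ω t)
    (P := μ) fun t => (measurable_pi_apply t).aemeasurable
  exact hμ.unique ((isProjectiveLimit_nat_iff hproj ν).2 fun n => (h n).symm)

variable {G : Type*} [MeasurableSpace G] [MeasurableSingletonClass G]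

theorem ext_of_cylinder [Countable G] {μ ν : Measure (ℕ → G)} [IsFiniteMeasure μ]
    (h : ∀ n (y : ℕ → G), μ {ω | ∀ k ≤ n, ω k = y k} = ν {ω | ∀ k ≤ n, ω k = y k}) :
    μ = ν := by
  refine ext_of_map_frestrictLe fun n => ext_of_singleton fun v => ?_
  rw [map_apply (Preorder.measurable_frestrictLe n) (measurableSet_singleton v),
    map_apply (Preorder.measurable_frestrictLe n) (measurableSet_singleton v)]
  obtain he | ⟨y, hy⟩ := (Preorder.frestrictLe (π := fun _ => G) n ⁻¹' {v}).eq_empty_or_nonempty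
  · simp [he]
  · have hcyl : Preorder.frestrictLe (π := fun _ => G) n ⁻¹' {v} = {ω | ∀ k ≤ n, ω k = y k} := by
      ext ω
      simp only [Set.mem_preimage, Set.mem_singleton_iff] at hy ⊢
      subst hy
      simp [funext_iff, Preorder.frestrictLe]
    rw [hcyl, h]

end MeasureTheory.Measure

theorem measurableSet_cylinder {G : Type*} [MeasurableSpace G] [MeasurableSingletonClass G]
    (n : ℕ) (y : ℕ → G) : MeasurableSet {ω : ℕ → G | ∀ k ≤ n, ω k = y k} := by
  simp only [Set.ofPred_forall]
  exact .iInter fun k => .iInter fun _ =>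
    measurableSet_singleton (y k) |>.preimage (measurable_pi_apply k)

namespace ChainHitTime

variable {G : Type*}

noncomputable def valueBeforeHit (xstar : G) (f : G → ℝ) (k : ℕ) (ω : ℕ → G) : ℝ :=
  if (k : ℕ∞) < chainHitTime xstar ω then f (ω k) else 0

noncomputable def hitIndicator (xstar : G) (j : ℕ) (ω : ℕ → G) : ℝ :=
  if chainHitTime xstar ω = j then 1 else 0

variable {xstar : G} {ω : ℕ → G}

theorem eq_zero_iff : chainHitTime xstar ω = 0 ↔ ω 0 = xstar := by
  refine ⟨fun h => ?_, fun h => le_antisymm (iInf₂_le 0 h) bot_le⟩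
  by_contra h0
  have : (1 : ℕ∞) ≤ chainHitTime xstar ω := le_iInf₂ fun k hk => by
    rcases k with _ | k
    · exact absurd hk h0
    · exact_mod_cast Nat.succ_pos k
  simp [h] at this

theorem eq_shift_add_one (h : ω 0 ≠ xstar) :
    chainHitTime xstar ω = chainHitTime xstar (fun n => ω (n + 1)) + 1 := by
  refine le_antisymm ?_ (le_iInf₂ fun k hk => ?_)
  · rw [chainHitTime, chainHitTime, ENat.iInf₂_add]
    exact le_iInf₂ fun k hk => by exact_mod_cast iInf₂_le (k + 1) hk
  · rcases k with _ | k
    · exact absurd hk h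
    · push_cast
      exact add_le_add_left (iInf₂_le k hk) 1

theorem valueBeforeHit_of_start (h : ω 0 = xstar) (f : G → ℝ) (k : ℕ) :
    valueBeforeHit xstar f k ω = 0 := by
  simp [valueBeforeHit, eq_zero_iff.2 h]

theorem hitIndicator_of_start (h : ω 0 = xstar) (j : ℕ) :
    hitIndicator xstar j ω = if j = 0 then 1 else 0 := by
  simp [hitIndicator, eq_zero_iff.2 h, eq_comm]

theorem valueBeforeHit_zero (h : ω 0 ≠ xstar) (f : G → ℝ) :
    valueBeforeHit xstar f 0 ω = f (ω 0) := by
  simp [valueBeforeHit, pos_iff_ne_zero, eq_zero_iff, h]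

theorem hitIndicator_zero (h : ω 0 ≠ xstar) : hitIndicator xstar 0 ω = 0 := by
  simp [hitIndicator, eq_zero_iff, h]

theorem valueBeforeHit_succ (h : ω 0 ≠ xstar) (f : G → ℝ) (k : ℕ) :
    valueBeforeHit xstar f (k + 1) ω = valueBeforeHit xstar f k (fun n => ω (n + 1)) := by
  simp [valueBeforeHit, eq_shift_add_one h]

theorem hitIndicator_succ (h : ω 0 ≠ xstar) (j : ℕ) :
    hitIndicator xstar (j + 1) ω = hitIndicator xstar j (fun n => ω (n + 1)) := by
  simp [hitIndicator, eq_shift_add_one h]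

theorem abs_valueBeforeHit_le {f : G → ℝ} {M : ℝ} (hM : ∀ y, |f y| ≤ M) (k : ℕ) (ω : ℕ → G) :
    |valueBeforeHit xstar f k ω| ≤ M := by
  unfold valueBeforeHit
  split_ifs
  · exact hM _
  · simpa using (abs_nonneg _).trans (hM (ω 0))

theorem abs_hitIndicator_le (j : ℕ) (ω : ℕ → G) : |hitIndicator xstar j ω| ≤ 1 := by
  unfold hitIndicator
  split_ifs <;> simp

variable [MeasurableSpace G] [MeasurableSingletonClass G]

theorem measurable (xstar : G) : Measurable (chainHitTime (G := G) xstar) := by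
  classical
  -- `ℕ∞` carries the discrete σ-algebra, which is the Borel σ-algebra of its order topology.
  have : BorelSpace ℕ∞ := ⟨borel_eq_top_of_countable.symm⟩
  have h : chainHitTime xstar = fun ω : ℕ → G => ⨅ k : ℕ, if ω k = xstar then (k : ℕ∞) else ⊤ := by
    ext1 ω; simp only [chainHitTime, iInf_eq_if]
  rw [h]
  exact .iInf fun k => .ite (measurableSet_singleton xstar |>.preimage (measurable_pi_apply k))
    measurable_const measurable_const

theorem measurable_valueBeforeHit {f : G → ℝ} (hf : Measurable f) (k : ℕ) :
    Measurable (valueBeforeHit xstar f k) :=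
  .ite (measurable xstar (.of_discrete (s := Set.Ioi (k : ℕ∞)))) (hf.comp (measurable_pi_apply k))
    measurable_const

theorem measurable_hitIndicator (j : ℕ) : Measurable (hitIndicator xstar j) :=
  .ite (measurable xstar (measurableSet_singleton (j : ℕ∞))) measurable_const measurable_const

end ChainHitTime

section TrajectoryLaw

variable {G : Type*} [DecidableEq G] [MeasurableSpace G]

def IsTrajectoryLaw (κ : Kernel G G) (P : G → Measure (ℕ → G)) : Prop :=
  ∀ x n (y : ℕ → G), P x {ω | ∀ k ≤ n, ω k = y k} =
    (if y 0 = x then 1 else 0) * ∏ k ∈ Finset.range n, κ (y k) {y (k + 1)}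

variable [MeasurableSingletonClass G] {κ : Kernel G G} {P : G → Measure (ℕ → G)}

namespace IsTrajectoryLaw

theorem ae_start (hP : ∀ x, IsProbabilityMeasure (P x)) (hκP : IsTrajectoryLaw κ P) (x : G) :
    ∀ᵐ ω ∂P x, ω 0 = x := by
  have := hP x
  have h : P x {ω | ∀ k ≤ 0, ω k = x} = 1 := (hκP x 0 fun _ => x).trans (by simp)
  filter_upwards [(mem_ae_iff_prob_eq_one (measurableSet_cylinder 0 _)).2 h] with ω hω
  exact hω 0 le_rfl

theorem integral_eq_of_start (hP : ∀ x, IsProbabilityMeasure (P x)) (hκP : IsTrajectoryLaw κ P)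
    {F : (ℕ → G) → ℝ} {x : G} {c : ℝ} (h : ∀ ω, ω 0 = x → F ω = c) :
    ∫ ω, F ω ∂P x = c := by
  have := hP x
  rw [integral_congr_ae ((hκP.ae_start hP x).mono h), integral_const, probReal_univ, one_smul]

/-- The Markov property at time one. -/
theorem map_shift_eq_comp [Countable G] (hP : ∀ x, IsProbabilityMeasure (P x))
    (hκP : IsTrajectoryLaw κ P) (x : G) :
    (P x).map (fun ω n => ω (n + 1)) = (Kernel.ofFunOfCountable P ∘ₖ κ) x := by
  have := hP x
  refine Measure.ext_of_cylinder fun n y => ?_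
  rw [Measure.map_apply (by fun_prop) (measurableSet_cylinder n y),
    Kernel.comp_apply' _ _ _ (measurableSet_cylinder n y)]
  have hstart : P x {ω | ω 0 = x}ᶜ = 0 := hκP.ae_start hP x
  have hset : (fun (ω : ℕ → G) n => ω (n + 1)) ⁻¹' {ω | ∀ k ≤ n, ω k = y k} ∩ {ω | ω 0 = x} =
      {ω | ∀ k ≤ n + 1, ω k = if k = 0 then x else y (k - 1)} := by
    ext ω
    simp only [Set.mem_inter_iff, Set.mem_preimage, Set.mem_ofPred_eq]
    refine ⟨fun ⟨h, h0⟩ k hk => ?_, fun h => ⟨fun k hk => ?_, h 0 (Nat.zero_le _)⟩⟩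
    · rcases k with _ | k
      · simpa using h0
      · simpa using h k (by omega)
    · simpa using h (k + 1) (by omega)
  rw [← measure_inter_conull hstart, hset, hκP, Finset.prod_range_succ']
  simp only [if_true, one_mul, Nat.add_eq_zero_iff, one_ne_zero, and_false, if_false,
    Nat.add_sub_cancel]
  have hcyl (b : G) : Kernel.ofFunOfCountable P b {ω | ∀ k ≤ n, ω k = y k} =
      Set.indicator {y 0} (fun _ => ∏ k ∈ Finset.range n, κ (y k) {y (k + 1)}) b := by
    rw [show Kernel.ofFunOfCountable P b = P b from rfl, hκP]
    by_cases hb : y 0 = b <;> simp [hb, Ne.symm]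
  rw [lintegral_congr hcyl, lintegral_indicator_const (measurableSet_singleton _), mul_comm]

theorem integral_eq_integral_integral_of_shift [Countable G]
    (hP : ∀ x, IsProbabilityMeasure (P x)) (hκP : IsTrajectoryLaw κ P)
    {F₀ F₁ : (ℕ → G) → ℝ} (hF₀ : Measurable F₀) {C : ℝ} (hC : ∀ ω, |F₀ ω| ≤ C) {x : G}
    (h : ∀ ω, ω 0 = x → F₁ ω = F₀ (fun n => ω (n + 1))) :
    ∫ ω, F₁ ω ∂P x = ∫ y, ∫ ω, F₀ ω ∂P y ∂κ x := by
  have := hP x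
  have hshift : Measurable (fun (ω : ℕ → G) n => ω (n + 1)) := by fun_prop
  have hint : Integrable F₀ ((P x).map fun ω n => ω (n + 1)) :=
    .of_bound hF₀.aestronglyMeasurable C (ae_of_all _ hC)
  rw [hκP.map_shift_eq_comp hP] at hint
  calc ∫ ω, F₁ ω ∂P x = ∫ ω, F₀ (fun n => ω (n + 1)) ∂P x :=
        integral_congr_ae ((hκP.ae_start hP x).mono h)
    _ = ∫ ω, F₀ ω ∂(Kernel.ofFunOfCountable P ∘ₖ κ) x := by
        rw [← hκP.map_shift_eq_comp hP, integral_map hshift.aemeasurable hF₀.aestronglyMeasurable]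
    _ = ∫ y, ∫ ω, F₀ ω ∂P y ∂κ x := Kernel.integral_comp hint

end IsTrajectoryLaw

end TrajectoryLaw

section MeanGenFun

variable {G : Type*} [MeasurableSpace G] {P : G → Measure (ℕ → G)}

noncomputable def meanGenFun (P : G → Measure (ℕ → G)) (F : ℕ → (ℕ → G) → ℝ) (s : ℝ) (x : G) :
    ℝ :=
  ∑' k, s ^ k * ∫ ω, F k ω ∂P x

theorem abs_meanGenFun_le (hP : ∀ x, IsProbabilityMeasure (P x)) {F : ℕ → (ℕ → G) → ℝ} {C s : ℝ}
    (hC : ∀ k ω, |F k ω| ≤ C) (hs : |s| < 1) (x : G) : |meanGenFun P F s x| ≤ C * (1 - |s|)⁻¹ := by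
  have := hP x
  exact abs_tsum_pow_mul_le (fun k => abs_integral_le_of_abs_le (hC k)) hs

theorem integral_tsum_eq_meanGenFun (hP : ∀ x, IsProbabilityMeasure (P x))
    {F : ℕ → (ℕ → G) → ℝ} (hF : ∀ k, Measurable (F k)) {C s : ℝ} (hC : ∀ k ω, |F k ω| ≤ C)
    (hs : |s| < 1) (x : G) : ∫ ω, ∑' k, s ^ k * F k ω ∂P x = meanGenFun P F s x := by
  have := hP x
  exact integral_tsum_pow_mul (fun k => (hF k).aestronglyMeasurable) hC hs

variable [Countable G] [DecidableEq G] [DiscreteMeasurableSpace G] {κ : Kernel G G}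
  [IsMarkovKernel κ]

namespace IsTrajectoryLaw

theorem meanGenFun_eq_add_integral (hP : ∀ x, IsProbabilityMeasure (P x))
    (hκP : IsTrajectoryLaw κ P) {F : ℕ → (ℕ → G) → ℝ} (hF : ∀ k, Measurable (F k)) {C s : ℝ}
    (hC : ∀ k ω, |F k ω| ≤ C) (hs : |s| < 1) {x : G}
    (hstep : ∀ k ω, ω 0 = x → F (k + 1) ω = F k (fun n => ω (n + 1))) :
    meanGenFun P F s x = ∫ ω, F 0 ω ∂P x + s * ∫ y, meanGenFun P F s y ∂κ x :=
  tsum_pow_mul_eq_add_integral (c := fun k y => ∫ ω, F k ω ∂P y)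
    (fun k y => by have := hP y; exact abs_integral_le_of_abs_le (hC k)) hs
    fun k => hκP.integral_eq_integral_integral_of_shift hP (hF k) (hC k) (hstep k)

end IsTrajectoryLaw

end MeanGenFun

section Renewal

open ChainHitTime

variable {G : Type*} [DecidableEq G] [MeasurableSpace G] {κ : Kernel G G}
  {P : G → Measure (ℕ → G)} {xstar : G} {f : G → ℝ} {M s : ℝ}

namespace IsTrajectoryLaw

section Start

variable [MeasurableSingletonClass G]

theorem meanGenFun_valueBeforeHit_self (hP : ∀ x, IsProbabilityMeasure (P x))
    (hκP : IsTrajectoryLaw κ P) : meanGenFun P (valueBeforeHit xstar f) s xstar = 0 := by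
  simp [meanGenFun, hκP.integral_eq_of_start hP fun ω h0 => valueBeforeHit_of_start h0 f _]

theorem meanGenFun_hitIndicator_self (hP : ∀ x, IsProbabilityMeasure (P x))
    (hκP : IsTrajectoryLaw κ P) : meanGenFun P (hitIndicator xstar) s xstar = 1 := by
  simp [meanGenFun, hκP.integral_eq_of_start hP fun ω h0 => hitIndicator_of_start h0 _]

end Start

variable [Countable G] [DiscreteMeasurableSpace G] [IsMarkovKernel κ]

theorem meanGenFun_eval (hP : ∀ x, IsProbabilityMeasure (P x)) (hκP : IsTrajectoryLaw κ P)
    (hM : ∀ y, |f y| ≤ M) (hs : |s| < 1) (x : G) :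
    meanGenFun P (fun k ω => f (ω k)) s x =
      f x + s * ∫ y, meanGenFun P (fun k ω => f (ω k)) s y ∂κ x := by
  rw [hκP.meanGenFun_eq_add_integral hP (F := fun k ω => f (ω k))
    (fun k => Measurable.of_discrete.comp (measurable_pi_apply k))
    (fun k ω => hM (ω k)) hs fun _ _ _ => rfl,
    hκP.integral_eq_of_start hP fun ω h0 => congrArg f h0]

theorem meanGenFun_valueBeforeHit_of_ne (hP : ∀ x, IsProbabilityMeasure (P x))
    (hκP : IsTrajectoryLaw κ P) (hM : ∀ y, |f y| ≤ M) (hs : |s| < 1) {x : G} (hx : x ≠ xstar) :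
    meanGenFun P (valueBeforeHit xstar f) s x =
      f x + s * ∫ y, meanGenFun P (valueBeforeHit xstar f) s y ∂κ x := by
  rw [hκP.meanGenFun_eq_add_integral hP (measurable_valueBeforeHit .of_discrete)
    (abs_valueBeforeHit_le hM) hs fun k ω h0 => valueBeforeHit_succ (h0 ▸ hx) f k,
    hκP.integral_eq_of_start hP fun ω h0 => by rw [valueBeforeHit_zero (h0 ▸ hx), h0]]

theorem meanGenFun_hitIndicator_of_ne (hP : ∀ x, IsProbabilityMeasure (P x))
    (hκP : IsTrajectoryLaw κ P) (hs : |s| < 1) {x : G} (hx : x ≠ xstar) :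
    meanGenFun P (hitIndicator xstar) s x =
      s * ∫ y, meanGenFun P (hitIndicator xstar) s y ∂κ x := by
  rw [hκP.meanGenFun_eq_add_integral hP measurable_hitIndicator abs_hitIndicator_le hs
    fun j ω h0 => hitIndicator_succ (h0 ▸ hx) j,
    hκP.integral_eq_of_start hP fun ω h0 => hitIndicator_zero (h0 ▸ hx), zero_add]

theorem meanGenFun_renewal (hP : ∀ x, IsProbabilityMeasure (P x)) (hκP : IsTrajectoryLaw κ P)
    (hM : ∀ y, |f y| ≤ M) (hs : |s| < 1) (x : G) :
    meanGenFun P (fun k ω => f (ω k)) s x =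
      meanGenFun P (valueBeforeHit xstar f) s x +
        meanGenFun P (hitIndicator xstar) s x * meanGenFun P (fun k ω => f (ω k)) s xstar :=
  eq_add_mul_of_first_step κ hs (abs_meanGenFun_le hP (fun k ω => hM (ω k)) hs)
    (abs_meanGenFun_le hP (abs_valueBeforeHit_le hM) hs)
    (abs_meanGenFun_le hP abs_hitIndicator_le hs)
    (hκP.meanGenFun_valueBeforeHit_self hP) (hκP.meanGenFun_hitIndicator_self hP)
    (fun y _ => hκP.meanGenFun_eval hP hM hs y)
    (fun _ hy => hκP.meanGenFun_valueBeforeHit_of_ne hP hM hs hy)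
    (fun _ hy => hκP.meanGenFun_hitIndicator_of_ne hP hs hy) x

end IsTrajectoryLaw

end Renewal

/-- Let `G` be a countable set with the discrete σ-algebra, `κ` a Markov
kernel on `G`, `x* ∈ G`, and for `x ∈ G` let `P x` be the trajectory law of the
time-homogeneous Markov chain started at `x` with transition kernel `κ` (characterized by
its cylinder probabilities). With `σ` the first hitting time of `x*`, for every bounded
`f : G → ℝ`, every `x ∈ G` and every `|s| < 1`,
`∑_{k ≥ 0} s^k E_{P_x}[f(Y k)] = E_{P_x}[∑_{k=0}^{σ-1} s^k f(Y k)]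
  + E_{P_x}[s^σ 1_{σ<∞}] ∑_{k ≥ 0} s^k E_{P_{x*}}[f(Y k)]`,
where on `{σ = ∞}` the inner sum runs over all `k ∈ ℕ`. -/
theorem statement15
    {G : Type*} [Countable G] [DecidableEq G] [MeasurableSpace G] [DiscreteMeasurableSpace G]
    (κ : ProbabilityTheory.Kernel G G) [IsMarkovKernel κ] (xstar : G)
    (P : G → Measure (ℕ → G)) (hP : ∀ x, IsProbabilityMeasure (P x))
    (hcyl : ∀ x : G, ∀ n : ℕ, ∀ y : ℕ → G,
      P x {ω | ∀ k ≤ n, ω k = y k} =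
        (if y 0 = x then 1 else 0) * ∏ k ∈ Finset.range n, κ (y k) {y (k + 1)})
    (f : G → ℝ) (hf : ∃ M : ℝ, ∀ y : G, |f y| ≤ M)
    (x : G) (s : ℝ) (hs : |s| < 1) :
    (∑' k : ℕ, s ^ k * ∫ ω, f (ω k) ∂(P x)) =
      (∫ ω, (∑' k : ℕ,
          if (k : ℕ∞) < chainHitTime xstar ω then s ^ k * f (ω k) else 0) ∂(P x)) +
        (∫ ω, (if chainHitTime xstar ω = ⊤ then (0 : ℝ)
            else s ^ (chainHitTime xstar ω).toNat) ∂(P x)) *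
          ∑' k : ℕ, s ^ k * ∫ ω, f (ω k) ∂(P xstar) := by
  obtain ⟨M, hM⟩ := hf
  have hκP : IsTrajectoryLaw κ P := hcyl
  have hB : ∫ ω, (∑' k : ℕ, if (k : ℕ∞) < chainHitTime xstar ω then s ^ k * f (ω k) else 0) ∂P x
      = meanGenFun P (ChainHitTime.valueBeforeHit xstar f) s x := by
    rw [← integral_tsum_eq_meanGenFun hP (ChainHitTime.measurable_valueBeforeHit .of_discrete)
      (ChainHitTime.abs_valueBeforeHit_le hM) hs x]
    simp only [ChainHitTime.valueBeforeHit, mul_ite, mul_zero]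
  have hR : ∫ ω, (if chainHitTime xstar ω = ⊤ then (0 : ℝ)
        else s ^ (chainHitTime xstar ω).toNat) ∂P x =
      meanGenFun P (ChainHitTime.hitIndicator xstar) s x := by
    rw [← integral_tsum_eq_meanGenFun hP ChainHitTime.measurable_hitIndicator
      ChainHitTime.abs_hitIndicator_le hs x]
    congr 1 with ω
    simp only [ChainHitTime.hitIndicator, mul_ite, mul_one, mul_zero]
    induction chainHitTime xstar ω using ENat.recTopCoe with
    | top => simp
    | coe n => simp
  rw [hB, hR]
  exact hκP.meanGenFun_renewal hP hM hs x
end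

section
/- Let t_1 > 0 and, for each v > 0, let g_v : ℕ₀ → ℕ₀ be nondecreasing, extended by g_v(−1) := 0. If lim_{v→∞} g_v(⌊v t_1⌋)/v = 0, then lim_{v→∞} sup_{t ∈ [0, t_1]} | (⌊vt⌋ − g_v(⌊vt⌋ − 1))/v − t | = 0. -/
/-! Since `⌊vt⌋` is within `1` of `vt` and, by monotonicity, the correction term
`g v (⌊vt⌋ - 1)` is at most `g v ⌊vt₁⌋` for `t ≤ t₁`, the error is at most
`(1 + g v ⌊vt₁⌋) / v` uniformly in `t`, and this tends to `0`. -/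

open Filter Topology

lemma abs_floor_sub_div_sub_le {v G : ℝ} (hv : 0 < v) (hG : 0 ≤ G) (t : ℝ) :
    |((⌊v * t⌋ : ℝ) - G) / v - t| ≤ (1 + G) / v := by
  have hfloor : |(⌊v * t⌋ : ℝ) - v * t| ≤ 1 := by
    rw [abs_le]
    constructor <;> linarith [Int.floor_le (v * t), Int.sub_one_lt_floor (v * t)]
  have hsplit : ((⌊v * t⌋ : ℝ) - G) / v - t = ((⌊v * t⌋ - v * t) - G) / v := by
    field_simp; ring
  rw [hsplit, abs_div, abs_of_pos hv]
  gcongr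
  calc |(⌊v * t⌋ : ℝ) - v * t - G| ≤ |(⌊v * t⌋ : ℝ) - v * t| + |G| := abs_sub _ _
    _ ≤ 1 + G := by rw [abs_of_nonneg hG]; linarith

section ShiftedValue

variable {f : ℕ → ℕ} {n : ℤ}

lemma ite_pred_nonneg :
    0 ≤ if n - 1 < 0 then (0 : ℝ) else (f (n - 1).toNat : ℝ) := by
  split <;> positivity

lemma ite_pred_le_of_le (hf : Monotone f) {m : ℤ} (hnm : n ≤ m) :
    (if n - 1 < 0 then (0 : ℝ) else (f (n - 1).toNat : ℝ)) ≤ f m.toNat := by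
  split
  · positivity
  · exact_mod_cast hf (Int.toNat_le_toNat (by omega))

end ShiftedValue

theorem statement16_general
    (t₁ : ℝ) (g : ℝ → ℕ → ℕ)
    (hmono : ∀ v : ℝ, 0 < v → Monotone (g v))
    (hlim : Tendsto (fun v : ℝ => (g v (⌊v * t₁⌋.toNat) : ℝ) / v) atTop (nhds 0)) :
    ∀ ε : ℝ, 0 < ε → ∃ v₀ : ℝ, ∀ v : ℝ, v₀ ≤ v → ∀ t ∈ Set.Icc (0 : ℝ) t₁,
      |(((⌊v * t⌋ : ℤ) : ℝ) -
          (if ⌊v * t⌋ - 1 < 0 then (0 : ℝ) else (g v (⌊v * t⌋ - 1).toNat : ℝ))) / v - t| ≤ ε := by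
  intro ε hε
  have hbound : Tendsto (fun v : ℝ => v⁻¹ + (g v (⌊v * t₁⌋.toNat) : ℝ) / v) atTop (𝓝 0) := by
    simpa using tendsto_inv_atTop_zero.add hlim
  obtain ⟨v₀, hv₀⟩ := eventually_atTop.mp
    ((hbound.eventually (ge_mem_nhds hε)).and (eventually_gt_atTop 0))
  refine ⟨v₀, fun v hv t ht => ?_⟩
  obtain ⟨hsmall, hvpos⟩ := hv₀ v hv
  have hfloor : ⌊v * t⌋ ≤ ⌊v * t₁⌋ :=
    Int.floor_le_floor (mul_le_mul_of_nonneg_left ht.2 hvpos.le)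
  calc _ ≤ (1 + if ⌊v * t⌋ - 1 < 0 then (0 : ℝ) else (g v (⌊v * t⌋ - 1).toNat : ℝ)) / v :=
        abs_floor_sub_div_sub_le hvpos ite_pred_nonneg t
    _ ≤ (1 + g v (⌊v * t₁⌋.toNat)) / v := by
        gcongr; exact ite_pred_le_of_le (hmono v hvpos) hfloor
    _ = v⁻¹ + (g v (⌊v * t₁⌋.toNat) : ℝ) / v := by ring
    _ ≤ ε := hsmall

/-- Let `t₁ > 0` and, for each `v > 0`, let `g v : ℕ → ℕ` be
nondecreasing, extended by `g v (-1) := 0`. If `g v ⌊v t₁⌋ / v → 0` as `v → ∞`, then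
`sup_{t ∈ [0, t₁]} |(⌊vt⌋ - g v (⌊vt⌋ - 1))/v - t| → 0` as `v → ∞`. -/
theorem statement16
    (t₁ : ℝ) (ht₁ : 0 < t₁) (g : ℝ → ℕ → ℕ)
    (hmono : ∀ v : ℝ, 0 < v → Monotone (g v))
    (hlim : Tendsto (fun v : ℝ => (g v (⌊v * t₁⌋.toNat) : ℝ) / v) atTop (nhds 0)) :
    ∀ ε : ℝ, 0 < ε → ∃ v₀ : ℝ, ∀ v : ℝ, v₀ ≤ v → ∀ t ∈ Set.Icc (0 : ℝ) t₁,
      |(((⌊v * t⌋ : ℤ) : ℝ) -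
          (if ⌊v * t⌋ - 1 < 0 then (0 : ℝ) else (g v (⌊v * t⌋ - 1).toNat : ℝ))) / v - t| ≤ ε :=
  statement16_general t₁ g hmono hlim
end
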